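/- arXiv:1412.3281 — 3 statements merged into one kernel-verified Lean document; each statement's English description precedes it below -/
import Mathlib

section
/- For λ, α > 0 with λ^β < α, β ∈ (0,1], pt > 0, and n ∈ ℤ₊, the integral ∫_0^∞ p̄_β(n|z,λ) g(z|α,pt) dz equals ((-1)^n/n!)·(1/Γ(pt))·∑_{r=0}^∞ ((-λ^β/α)^r/r!)·(Γ(βr+1)Γ(r+pt)/Γ(βr+1-n)), where p̄_β(n|z,λ) = ((-1)^n/n!)∑_{k=0}^∞ ((-λ^β z)^k/k!)·Γ(βk+1)/Γ(βk+1-n) and g(z|α,pt) = (α^{pt}/Γ(pt)) z^{pt-1} e^{-αz}. -/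
/-!
Expand `p̄_β(n|z,λ)` in powers of `z` and integrate term by term against the Gamma density, using
`∫₀^∞ z^(k+pt-1) e^(-αz) dz = Γ(k+pt) / α^(k+pt)`. The interchange of sum and integral is justified
by absolute convergence: `Γ(βk+1)/Γ(βk+1-n)` is the falling factorial `(βk)(βk-1)⋯(βk-n+1)`,
whose size is at most `Γ(k+pt+n)/Γ(k+pt)`, and `∑ (λ^β/α)^k Γ(k+pt+n)/k!` converges by the ratio
test because `λ^β < α`.
-/

open MeasureTheory Real Set Filter Topology Polynomial
open scoped Nat

namespace Real

theorem Gamma_add_one_div_Gamma_sub_nat_eq_descPochhammer {x : ℝ} (hx : 0 ≤ x) (n : ℕ) :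
    Gamma (x + 1) / Gamma (x + 1 - n) = (descPochhammer ℝ n).eval x := by
  induction n with
  | zero => simp [(Gamma_pos_of_pos (by linarith : 0 < x + 1)).ne']
  | succ n ih =>
    rw [show x + 1 - (n + 1 : ℕ) = x - n by push_cast; ring]
    by_cases hpole : Gamma (x - n) = 0
    · -- `x` is then a natural number `≤ n`, a root of the falling factorial of length `n + 1`
      obtain ⟨m, hm⟩ := (Gamma_eq_zero_iff _).1 hpole
      have hmn : m ≤ n := by exact_mod_cast (show (m : ℝ) ≤ n by linarith)
      have hx_nat : x = ((n - m : ℕ) : ℝ) := by push_cast [hmn]; linarith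
      rw [hpole, div_zero, hx_nat, descPochhammer_eval_eq_descFactorial,
        Nat.descFactorial_eq_zero_iff_lt.2 (by omega), Nat.cast_zero]
    · have hne : x - n ≠ 0 := fun h => hpole (by rw [h, Gamma_zero])
      have hrec : Gamma (x + 1 - n) = (x - n) * Gamma (x - n) := by
        rw [← Gamma_add_one hne]; ring_nf
      rw [descPochhammer_succ_eval, ← ih, hrec]
      field_simp

theorem abs_descPochhammer_eval_mul_Gamma_le {x s : ℝ} (hs : 0 < s) (hxs : |x| ≤ s) (n : ℕ) :
    |(descPochhammer ℝ n).eval x| * Gamma s ≤ Gamma (s + n) := by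
  induction n with
  | zero => simp
  | succ n ih =>
    have hfactor : |x - n| ≤ s + n := by
      rw [abs_le] at hxs ⊢
      constructor <;> linarith [n.cast_nonneg (α := ℝ)]
    calc |(descPochhammer ℝ (n + 1)).eval x| * Gamma s
        = |x - n| * (|(descPochhammer ℝ n).eval x| * Gamma s) := by
          rw [descPochhammer_succ_eval, abs_mul]; ring
      _ ≤ (s + n) * Gamma (s + n) := by gcongr
      _ = Gamma (s + (n + 1 : ℕ)) := by
          rw [Nat.cast_succ, ← add_assoc, Gamma_add_one (by positivity)]

theorem abs_Gamma_div_Gamma_sub_nat_mul_Gamma_le {β c : ℝ} (hβ : β ∈ Icc 0 1) (hc : 0 < c)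
    (n k : ℕ) :
    |Gamma (β * k + 1) / Gamma (β * k + 1 - n)| * Gamma (k + c) ≤ Gamma (k + c + n) := by
  have hβk : 0 ≤ β * k := mul_nonneg hβ.1 k.cast_nonneg
  rw [Gamma_add_one_div_Gamma_sub_nat_eq_descPochhammer hβk]
  refine abs_descPochhammer_eval_mul_Gamma_le (by positivity) ?_ n
  rw [abs_of_nonneg hβk]
  linarith [mul_le_of_le_one_left k.cast_nonneg hβ.2]

theorem summable_pow_div_factorial_mul_Gamma_add {ρ s : ℝ} (hρ0 : 0 < ρ) (hρ1 : ρ < 1)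
    (hs : 0 < s) : Summable fun r : ℕ => ρ ^ r / r ! * Gamma (r + s) := by
  have hpos (r : ℕ) : 0 < ρ ^ r / r ! * Gamma (r + s) := by
    have := Gamma_pos_of_pos (by positivity : (0 : ℝ) < r + s)
    positivity
  have hratio (r : ℕ) : ‖ρ ^ (r + 1) / ((r + 1)! : ℝ) * Gamma ((r + 1 : ℕ) + s)‖ /
      ‖ρ ^ r / (r ! : ℝ) * Gamma (r + s)‖ = ρ * (1 + (s - 1) / (r + 1)) := by
    rw [norm_of_nonneg (hpos _).le, norm_of_nonneg (hpos r).le,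
      show ((r + 1 : ℕ) : ℝ) + s = (r + s) + 1 by push_cast; ring,
      Gamma_add_one (by positivity), Nat.factorial_succ]
    have := (hpos r).ne'
    push_cast
    field_simp
    ring
  have hlim : Tendsto (fun r : ℕ => ρ * (1 + (s - 1) / (r + 1))) atTop (𝓝 (ρ * (1 + 0))) :=
    tendsto_const_nhds.mul <| tendsto_const_nhds.add <| tendsto_const_nhds.div_atTop <|
      tendsto_atTop_add_const_right _ 1 tendsto_natCast_atTop_atTop
  rw [add_zero, mul_one] at hlim
  exact summable_of_ratio_test_tendsto_lt_one hρ1 (.of_forall fun r => (hpos r).ne')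
    (by simpa only [hratio] using hlim)

end Real

theorem pow_mul_rpow_sub_one {z : ℝ} (hz : 0 < z) (r : ℕ) (c : ℝ) :
    z ^ r * z ^ (c - 1) = z ^ ((r : ℝ) + c - 1) := by
  rw [← rpow_natCast, ← rpow_add hz, add_sub_assoc]

section GammaKernel

variable {c α : ℝ}

theorem integrableOn_pow_mul_rpow_mul_exp_neg_mul_Ioi (hc : 0 < c) (hα : 0 < α) (r : ℕ) :
    IntegrableOn (fun z : ℝ => z ^ r * (z ^ (c - 1) * exp (-(α * z)))) (Ioi 0) := by
  refine (integrableOn_rpow_mul_exp_neg_mul_rpow (s := r + c - 1)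
    (by linarith [r.cast_nonneg (α := ℝ)]) one_pos hα).congr_fun (fun z hz => ?_) measurableSet_Ioi
  dsimp only
  rw [← mul_assoc, pow_mul_rpow_sub_one hz, rpow_one, neg_mul]

theorem integral_pow_mul_rpow_mul_exp_neg_mul_Ioi (hc : 0 < c) (hα : 0 < α) (r : ℕ) :
    ∫ z in Ioi 0, z ^ r * (z ^ (c - 1) * exp (-(α * z))) =
      (1 / α) ^ ((r : ℝ) + c) * Gamma (r + c) := by
  rw [← integral_rpow_mul_exp_neg_mul_Ioi (by positivity) hα]
  exact setIntegral_congr_fun measurableSet_Ioi fun z hz => by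
    rw [← mul_assoc, pow_mul_rpow_sub_one hz]

theorem integral_tsum_mul_pow_mul_rpow_mul_exp_neg_mul_Ioi (hc : 0 < c) (hα : 0 < α)
    {a : ℕ → ℝ} (ha : Summable fun r : ℕ => |a r| * ((1 / α) ^ ((r : ℝ) + c) * Gamma (r + c))) :
    ∫ z in Ioi 0, (∑' r, a r * z ^ r) * (z ^ (c - 1) * exp (-(α * z))) =
      ∑' r, a r * ((1 / α) ^ ((r : ℝ) + c) * Gamma (r + c)) := by
  have hnorm (r : ℕ) : ∫ z in Ioi 0, ‖a r * (z ^ r * (z ^ (c - 1) * exp (-(α * z))))‖ =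
      |a r| * ((1 / α) ^ ((r : ℝ) + c) * Gamma (r + c)) := by
    rw [← integral_pow_mul_rpow_mul_exp_neg_mul_Ioi hc hα, ← integral_const_mul]
    refine setIntegral_congr_fun measurableSet_Ioi fun z (hz : 0 < z) => ?_
    rw [norm_mul, norm_eq_abs,
      norm_of_nonneg (show 0 ≤ z ^ r * (z ^ (c - 1) * exp (-(α * z))) by positivity)]
  calc ∫ z in Ioi 0, (∑' r, a r * z ^ r) * (z ^ (c - 1) * exp (-(α * z)))
      = ∫ z in Ioi 0, ∑' r, a r * (z ^ r * (z ^ (c - 1) * exp (-(α * z)))) := by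
        simp only [← tsum_mul_right, mul_assoc]
    _ = ∑' r, ∫ z in Ioi 0, a r * (z ^ r * (z ^ (c - 1) * exp (-(α * z)))) :=
        (integral_tsum_of_summable_integral_norm
          (fun r => (integrableOn_pow_mul_rpow_mul_exp_neg_mul_Ioi hc hα r).const_mul (a r))
          (by simpa only [hnorm] using ha)).symm
    _ = ∑' r, a r * ((1 / α) ^ ((r : ℝ) + c) * Gamma (r + c)) := by
        simp only [integral_const_mul, integral_pow_mul_rpow_mul_exp_neg_mul_Ioi hc hα]

theorem summable_abs_pow_div_factorial_mul_Gamma_div_Gamma_sub_nat {β q : ℝ} (hβ : β ∈ Icc 0 1)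
    (hq : 0 < q) (hqα : q < α) (hc : 0 < c) (n : ℕ) :
    Summable fun r : ℕ => |(-q) ^ r / r ! * (Gamma (β * r + 1) / Gamma (β * r + 1 - n))| *
      ((1 / α) ^ ((r : ℝ) + c) * Gamma (r + c)) := by
  have hα : 0 < α := hq.trans hqα
  refine .of_nonneg_of_le (fun r => by positivity) (fun r => ?_)
    ((summable_pow_div_factorial_mul_Gamma_add (div_pos hq hα) ((div_lt_one hα).2 hqα)
      (by positivity : 0 < c + n)).mul_left ((1 / α) ^ c))
  calc _ = (1 / α) ^ c * ((q / α) ^ r / r ! *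
          (|Gamma (β * r + 1) / Gamma (β * r + 1 - n)| * Gamma (r + c))) := by
        rw [rpow_add (by positivity), rpow_natCast]
        simp only [abs_mul, abs_div, abs_pow, abs_neg, abs_of_pos hq, Nat.abs_cast]
        ring
    _ ≤ (1 / α) ^ c * ((q / α) ^ r / r ! * Gamma (r + (c + n))) := by
        rw [← add_assoc]
        gcongr
        exact abs_Gamma_div_Gamma_sub_nat_mul_Gamma_le hβ hc n r

end GammaKernel

/-- The one-dimensional distribution of the SFNB process:
∫_0^∞ p̄_β(n|z,λ) g(z|α,pt) dz = ((-1)^n/n!)(1/Γ(pt)) ∑_r ((-λ^β/α)^r/r!) Γ(βr+1)Γ(r+pt)/Γ(βr+1-n). -/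
theorem sfnb_distribution (β lam α p t : ℝ) (hβ : β ∈ Set.Ioc (0 : ℝ) 1)
    (hlam : 0 < lam) (hα : 0 < α) (h : lam ^ β < α) (hpt : 0 < p * t) (n : ℕ) :
    (∫ z in Set.Ioi (0 : ℝ),
        (((-1 : ℝ) ^ n / (Nat.factorial n : ℝ)) *
          ∑' k : ℕ, ((-(lam ^ β) * z) ^ k / (Nat.factorial k : ℝ)) *
            (Real.Gamma (β * k + 1) / Real.Gamma (β * k + 1 - n))) *
        (α ^ (p * t) / Real.Gamma (p * t) * z ^ (p * t - 1) * Real.exp (-α * z))) =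
      ((-1 : ℝ) ^ n / (Nat.factorial n : ℝ)) * (1 / Real.Gamma (p * t)) *
        ∑' r : ℕ, ((-(lam ^ β / α)) ^ r / (Nat.factorial r : ℝ)) *
          (Real.Gamma (β * r + 1) * Real.Gamma (r + p * t) / Real.Gamma (β * r + 1 - n)) := by
  set c := p * t
  set q := lam ^ β
  set a : ℕ → ℝ := fun k => (-q) ^ k / k ! * (Gamma (β * k + 1) / Gamma (β * k + 1 - n))
  have hintegrand (z : ℝ) :
      ((-1 : ℝ) ^ n / n ! *
          ∑' k : ℕ, (-q * z) ^ k / k ! * (Gamma (β * k + 1) / Gamma (β * k + 1 - n))) *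
        (α ^ c / Gamma c * z ^ (c - 1) * exp (-α * z)) =
      ((-1 : ℝ) ^ n / n ! * (α ^ c / Gamma c)) *
        ((∑' k, a k * z ^ k) * (z ^ (c - 1) * exp (-(α * z)))) := by
    have hterm (k : ℕ) : (-q * z) ^ k / k ! * (Gamma (β * k + 1) / Gamma (β * k + 1 - n)) =
        a k * z ^ k := by
      simp only [a]; ring
    rw [tsum_congr hterm, neg_mul α]
    ring
  have ha := summable_abs_pow_div_factorial_mul_Gamma_div_Gamma_sub_nat (Ioc_subset_Icc_self hβ)
    (rpow_pos_of_pos hlam β) h hpt n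
  simp only [hintegrand]
  rw [integral_const_mul, integral_tsum_mul_pow_mul_rpow_mul_exp_neg_mul_Ioi hpt hα ha,
    mul_assoc, mul_assoc]
  congr 1
  rw [← tsum_mul_left, ← tsum_mul_left]
  refine tsum_congr fun r => ?_
  rw [rpow_add (by positivity), rpow_natCast, div_rpow zero_le_one hα.le, one_rpow]
  field_simp
  ring
end

section
/- For β = 1, λ, α > 0 with λ/α < 1, pt > 0 and n ∈ ℤ₊, the sum ((-1)^n/n!)·(1/Γ(pt))·∑_{j=n}^∞ (-λ/α)^j·Γ(j+pt)/(j-n)! equals (λ/(α+λ))^n·(α/(α+λ))^{pt}·C(n+pt-1, n), i.e., the NB(pt, λ/(α+λ)) probability mass at n. -/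
/-!
With `s = n + pt` and `y = -λ/α`, the substitution `j = n + k` turns the series into
`yⁿ · ∑ₖ Γ(s + k) yᵏ / k!`, and since `Γ(s + k) / (Γ(s) k!)` is the multiset coefficient
`multichoose s k = choose (s + k - 1) k`, this is `yⁿ Γ(s) (1 - y)^(-s)` by the binomial series,
valid because `|y| < 1`. As `1 - y = (α + λ)/α`, the result rearranges into the NB pmf.
-/

open Real

theorem hasSum_ite_le_sub {α : Type*} [AddCommMonoid α] [TopologicalSpace α] {f : ℕ → α} {a : α}
    (n : ℕ) (hf : HasSum f a) : HasSum (fun j => if n ≤ j then f (j - n) else 0) a := by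
  refine ((add_left_injective n).hasSum_iff fun j hj => ?_).mp ?_
  · exact if_neg fun hnj => hj ⟨j - n, Nat.sub_add_cancel hnj⟩
  · simpa [Function.comp_def] using hf

namespace Real

theorem Gamma_add_nat_eq_ascPochhammer_eval_mul {s : ℝ} (hs : ∀ m : ℕ, s ≠ -m) (n : ℕ) :
    Gamma (s + n) = (ascPochhammer ℝ n).eval s * Gamma s := by
  induction n with
  | zero => simp
  | succ n ih =>
    have hsn : s + n ≠ 0 := fun h => hs n (by linarith)
    rw [Nat.cast_succ, ← add_assoc, Gamma_add_one hsn, ih, ascPochhammer_succ_right]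
    simp only [Polynomial.eval_mul, Polynomial.eval_add, Polynomial.eval_X,
      Polynomial.eval_natCast]
    ring

theorem multichoose_eq_Gamma_div {s : ℝ} (hs : ∀ m : ℕ, s ≠ -m) (n : ℕ) :
    Ring.multichoose s n = Gamma (s + n) / (Gamma s * n.factorial) := by
  have hfact : n.factorial • Ring.multichoose s n = (ascPochhammer ℝ n).eval s := by
    rw [Ring.factorial_nsmul_multichoose_eq_ascPochhammer,
      Polynomial.ascPochhammer_smeval_eq_eval]
  rw [Gamma_add_nat_eq_ascPochhammer_eval_mul hs, ← hfact, nsmul_eq_mul]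
  field_simp [Gamma_ne_zero hs]

theorem hasSum_Gamma_mul_pow_div_factorial {s x : ℝ} (hs : ∀ m : ℕ, s ≠ -m) (hx : |x| < 1) :
    HasSum (fun k : ℕ => Gamma (s + k) * x ^ k / k.factorial) (Gamma s * (1 - x) ^ (-s)) := by
  have hball : x ∈ Metric.eball (0 : ℝ) 1 := by
    rw [Metric.mem_eball, edist_zero_right, enorm_eq_nnnorm]
    exact_mod_cast hx
  have hbinom := (one_div_one_sub_rpow_hasFPowerSeriesOnBall_zero s).hasSum hball
  simp only [FormalMultilinearSeries.ofScalars_apply_eq, zero_add, smul_eq_mul] at hbinom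
  have hterm : ∀ k : ℕ, Gamma (s + k) * x ^ k / k.factorial
      = Gamma s * (Ring.choose (s + k - 1) k * x ^ k) := fun k => by
    rw [← Ring.multichoose_eq, multichoose_eq_Gamma_div hs]
    field_simp [Gamma_ne_zero hs]
  have hsum : (1 - x) ^ (-s) = 1 / (1 - x) ^ s := by
    rw [rpow_neg (by linarith [le_abs_self x]), one_div]
  simpa only [hterm, hsum] using hbinom.mul_left (Gamma s)

theorem hasSum_pow_mul_Gamma_div_factorial_sub {s x : ℝ} (n : ℕ)
    (hs : ∀ m : ℕ, n + s ≠ -m) (hx : |x| < 1) :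
    HasSum (fun j : ℕ => if n ≤ j then x ^ j * Gamma (j + s) / (j - n).factorial else 0)
      (x ^ n * (Gamma (n + s) * (1 - x) ^ (-(n + s)))) := by
  have hsum := hasSum_ite_le_sub n ((hasSum_Gamma_mul_pow_div_factorial hs hx).mul_left (x ^ n))
  refine hsum.congr_fun fun j => ?_
  split_ifs with hnj
  · rw [Nat.cast_sub hnj, ← pow_mul_pow_sub _ hnj]
    ring_nf
  · rfl

end Real

/-- For β = 1 the SFNB distribution reduces to the NB(pt, λ/(α+λ)) pmf. -/
theorem sfnb_reduces_to_nb (lam α p t : ℝ) (hlam : 0 < lam) (hα : 0 < α)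
    (h : lam / α < 1) (hpt : 0 < p * t) (n : ℕ) :
    ((-1 : ℝ) ^ n / (Nat.factorial n : ℝ)) * (1 / Real.Gamma (p * t)) *
        (∑' j : ℕ, if n ≤ j then
          (-(lam / α)) ^ j * Real.Gamma (j + p * t) / (Nat.factorial (j - n) : ℝ) else 0) =
      (lam / (α + lam)) ^ n * (α / (α + lam)) ^ (p * t) *
        (Real.Gamma (n + p * t) / (Real.Gamma (p * t) * (Nat.factorial n : ℝ))) := by
  have hx : |-(lam / α)| < 1 := by
    rw [abs_neg, abs_of_pos (by positivity)]
    exact h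
  have hns : ∀ m : ℕ, n + p * t ≠ -m := fun m => by
    have : (0 : ℝ) ≤ m := m.cast_nonneg
    linarith
  rw [(hasSum_pow_mul_Gamma_div_factorial_sub n hns hx).tsum_eq]
  have hbase : 1 - -(lam / α) = (α / (α + lam))⁻¹ := by
    field_simp
    ring
  rw [hbase, inv_rpow (by positivity), rpow_neg (by positivity), inv_inv,
    rpow_add (by positivity), rpow_natCast]
  have hpow : (-1 : ℝ) ^ n * (-(lam / α)) ^ n * (α / (α + lam)) ^ n = (lam / (α + lam)) ^ n := by
    rw [← mul_pow, ← mul_pow]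
    field_simp
  have hGamma : Gamma (p * t) ≠ 0 := (Gamma_pos_of_pos hpt).ne'
  rw [← hpow]
  field_simp
end

section
/- Let d ≥ 1 and λ₁,…,λ_d > 0 with s(λ) = ∑_j λ_j, and let N¹,…,N^d be independent Poisson processes with rates λ_j, subordinated by a common independent Gamma process Y(t) ~ G(α, t). Then for n₁,…,n_d ∈ ℤ₊ with s(n) = ∑ n_j, P(N¹(Y(t)) = n₁, …, N^d(Y(t)) = n_d) = (α^t · s(n)! / (α + s(λ))^{s(n)+t}) · C(s(n)+t-1, t-1) · ∏_{i=1}^d λ_i^{n_i}/n_i!. -/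
/-! Conditionally on `Y(t) = y`, the joint Poisson weights factor as
`(∏ λᵢ^{nᵢ}/nᵢ!) · y^{s(n)} e^{-s(λ) y}`, so the mixing integral against the Gamma density
is a single Gamma integral
`∫ y^{s(n)+t-1} e^{-(α+s(λ)) y} dy = Γ(s(n)+t) / (α+s(λ))^{s(n)+t}`. -/

open Real MeasureTheory Set

theorem prod_mul_pow_mul_exp_div_factorial {ι : Type*} [Fintype ι] (lam : ι → ℝ)
    (n : ι → ℕ) (y : ℝ) :
    ∏ i, (lam i * y) ^ (n i) * exp (-(lam i) * y) / ((n i).factorial : ℝ) =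
      (∏ i, lam i ^ (n i) / ((n i).factorial : ℝ)) *
        (y ^ (∑ i, n i) * exp (-(∑ i, lam i) * y)) := by
  have factor : ∀ i, (lam i * y) ^ (n i) * exp (-(lam i) * y) / ((n i).factorial : ℝ) =
      lam i ^ (n i) / ((n i).factorial : ℝ) * (y ^ (n i) * exp (-(lam i) * y)) := by
    intro i
    ring
  rw [Finset.prod_congr rfl fun i _ => factor i, Finset.prod_mul_distrib, Finset.prod_mul_distrib,
    Finset.prod_pow_eq_pow_sum, ← exp_sum, ← Finset.sum_mul, Finset.sum_neg_distrib]

theorem integral_pow_mul_exp_mul_gamma_density (k : ℕ) {α β t : ℝ} (ht : 0 < t)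
    (hαβ : 0 < α + β) :
    ∫ y in Ioi (0 : ℝ),
        y ^ k * exp (-β * y) * (α ^ t / Gamma t * y ^ (t - 1) * exp (-α * y)) =
      α ^ t / Gamma t * Gamma (k + t) / (α + β) ^ ((k : ℝ) + t) := by
  have integrand : ∀ y ∈ Ioi (0 : ℝ),
      y ^ k * exp (-β * y) * (α ^ t / Gamma t * y ^ (t - 1) * exp (-α * y)) =
        α ^ t / Gamma t * (y ^ ((k + t) - 1) * exp (-((α + β) * y))) := by
    intro y (hy : 0 < y)
    have hpow : y ^ k * y ^ (t - 1) = y ^ ((k + t) - 1) := by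
      rw [← rpow_natCast, ← rpow_add hy, add_sub_assoc]
    have hexp : exp (-β * y) * exp (-α * y) = exp (-((α + β) * y)) := by
      rw [← exp_add]
      ring_nf
    rw [← hpow, ← hexp]
    ring
  rw [setIntegral_congr_fun measurableSet_Ioi integrand, integral_const_mul,
    integral_rpow_mul_exp_neg_mul_Ioi (by positivity) hαβ, div_rpow zero_le_one hαβ.le,
    one_rpow]
  ring

theorem multivariate_nb_joint_distribution_general (d : ℕ)
    (lam : Fin d → ℝ) (hlam : ∀ i, 0 < lam i) (α t : ℝ) (hα : 0 < α) (ht : 0 < t)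
    (n : Fin d → ℕ) :
    (∫ y in Set.Ioi (0 : ℝ),
        (∏ i, (lam i * y) ^ (n i) * Real.exp (-(lam i) * y) / (Nat.factorial (n i) : ℝ)) *
          (α ^ t / Real.Gamma t * y ^ (t - 1) * Real.exp (-α * y))) =
      α ^ t * (Nat.factorial (∑ i, n i) : ℝ) / (α + ∑ i, lam i) ^ ((∑ i, n i : ℕ) + t) *
        (Real.Gamma ((∑ i, n i : ℕ) + t) /
          (Real.Gamma t * (Nat.factorial (∑ i, n i) : ℝ))) *
        ∏ i, (lam i) ^ (n i) / (Nat.factorial (n i) : ℝ) := by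
  have hrate : 0 < α + ∑ i, lam i :=
    add_pos_of_pos_of_nonneg hα (Finset.sum_nonneg fun i _ => (hlam i).le)
  simp only [prod_mul_pow_mul_exp_div_factorial,
    mul_assoc (∏ i, lam i ^ n i / ((n i).factorial : ℝ))]
  rw [integral_const_mul, integral_pow_mul_exp_mul_gamma_density _ ht hrate]
  have hΓ := Gamma_pos_of_pos ht
  field_simp

/-- Joint distribution of d independent Poisson processes subordinated by a
common Gamma(α, t) subordinator, computed as the mixing integral:
∫_0^∞ ∏_i [(λ_i y)^{n_i} e^{-λ_i y}/n_i!]·(α^t/Γ(t)) y^{t-1} e^{-αy} dy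
= (α^t s(n)!/(α+s(λ))^{s(n)+t})·C(s(n)+t-1,t-1)·∏_i λ_i^{n_i}/n_i!. -/
theorem multivariate_nb_joint_distribution (d : ℕ) (hd : 1 ≤ d)
    (lam : Fin d → ℝ) (hlam : ∀ i, 0 < lam i) (α t : ℝ) (hα : 0 < α) (ht : 0 < t)
    (n : Fin d → ℕ) :
    (∫ y in Set.Ioi (0 : ℝ),
        (∏ i, (lam i * y) ^ (n i) * Real.exp (-(lam i) * y) / (Nat.factorial (n i) : ℝ)) *
          (α ^ t / Real.Gamma t * y ^ (t - 1) * Real.exp (-α * y))) =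
      α ^ t * (Nat.factorial (∑ i, n i) : ℝ) / (α + ∑ i, lam i) ^ ((∑ i, n i : ℕ) + t) *
        (Real.Gamma ((∑ i, n i : ℕ) + t) /
          (Real.Gamma t * (Nat.factorial (∑ i, n i) : ℝ))) *
        ∏ i, (lam i) ^ (n i) / (Nat.factorial (n i) : ℝ) :=
  multivariate_nb_joint_distribution_general d lam hlam α t hα ht n
end
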